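/- arXiv:2405.10289 — 3 statements merged into one kernel-verified Lean document; each statement's English description precedes it below -/
import Mathlib

section
/- Let O be an open subset of ℝ^d, and let f₁ and f₂ be real-valued locally weakly convex functions on O. Let g₁ and g₂ be selections of the Fréchet subdifferentials ∂f₁ and ∂f₂ on O, i.e. g₁(x) ∈ ∂f₁(x) and g₂(x) ∈ ∂f₂(x) for all x ∈ O. Then sup_{x ∈ O} H(∂f₁(x), ∂f₂(x)) ≤ sup_{x ∈ O} ‖g₁(x) − g₂(x)‖. -/
open MeasureTheory Metric Set Filter
open scoped InnerProductSpace ENNReal NNReal Topology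

noncomputable section

variable {E : Type*} [NormedAddCommGroup E] [InnerProductSpace ℝ E]

/-- The Fréchet subdifferential of a real-valued function `f` at `x`:
`∂f(x) = {g : f(y) ≥ f(x) + ⟨g, y - x⟩ + o(‖y - x‖) as y → x}`. -/
def fsubdiff (f : E → ℝ) (x : E) : Set E :=
  {g | ∀ ε > 0, ∀ᶠ y in nhds x, f x + ⟪g, y - x⟫_ℝ - ε * ‖y - x‖ ≤ f y}

/-- `f` is locally weakly convex on `O`: near every `x ∈ O` there is `λ < ∞` so that
`y ↦ f(y) + (λ/2)‖y‖²` is convex on a small ball around `x`. -/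
def LocWeaklyConvexOn (f : E → ℝ) (O : Set E) : Prop :=
  ∀ x ∈ O, ∃ lam : ℝ, ∃ ε > 0, ConvexOn ℝ (ball x ε) (fun y => f y + lam / 2 * ‖y‖ ^ 2)

/-! Near `x ∈ O` both `fᵢ + (λ/2)‖·‖²` are convex on a common ball, and adding `λ • y` turns the
Fréchet subgradients `gᵢ y` into genuine subgradients of these convex functions on the ball.
Comparing the two subgradient inequalities along a fine partition of a segment shows that the
difference of the convexified functions is `M`-Lipschitz, `M = sup ‖g₁ - g₂‖`. So for
`u ∈ ∂f₁(x)` the convexification of `f₂` lies above the cone `y ↦ c + ⟪u + λx, y - x⟫ - M‖y - x‖`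
touching it at `x`; separating its epigraph from the strict hypograph of the cone (Hahn–Banach)
gives a subgradient within `M` of `u + λx`, that is, an element of `∂f₂(x)` within `M` of `u`. -/

theorem mem_fsubdiff_of_eventually_le {f : E → ℝ} {p s : E}
    (h : ∀ᶠ y in 𝓝 p, f p + ⟪s, y - p⟫_ℝ ≤ f y) : s ∈ fsubdiff f p := fun ε hε =>
  h.mono fun y hy => by nlinarith [norm_nonneg (y - p)]

theorem add_mem_fsubdiff_add {f q : E → ℝ} {p g a : E} (hg : g ∈ fsubdiff f p)
    (hq : HasFDerivAt q (innerSL ℝ a) p) : g + a ∈ fsubdiff (f + q) p := by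
  intro ε hε
  filter_upwards [hg (ε / 2) (by positivity), hq.isLittleO.def (half_pos hε)] with y hfy hqy
  have hq' := (abs_le.1 ((Real.norm_eq_abs _).symm.trans_le hqy)).1
  simp only [innerSL_apply_apply, Pi.add_apply, inner_add_left] at hq' ⊢
  linarith

theorem add_mem_fsubdiff_add_iff {f q : E → ℝ} {p g a : E}
    (hq : HasFDerivAt q (innerSL ℝ a) p) : g + a ∈ fsubdiff (f + q) p ↔ g ∈ fsubdiff f p := by
  refine ⟨fun h => ?_, fun h => add_mem_fsubdiff_add h hq⟩
  have hq' : HasFDerivAt (-q) (innerSL ℝ (-a)) p := by simpa using hq.neg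
  simpa using add_mem_fsubdiff_add h hq'

theorem hasFDerivAt_half_mul_norm_sq (lam : ℝ) (p : E) :
    HasFDerivAt (fun y => lam / 2 * ‖y‖ ^ 2) (innerSL ℝ (lam • p)) p := by
  refine ((hasStrictFDerivAt_norm_sq p).hasFDerivAt.const_mul (lam / 2)).congr_fderiv ?_
  ext v
  simp
  ring

theorem ConvexOn.add_inner_le_of_mem_fsubdiff {U : Set E} {h : E → ℝ} {p s y : E}
    (hh : ConvexOn ℝ U h) (hp : p ∈ U) (hs : s ∈ fsubdiff h p) (hy : y ∈ U) :
    h p + ⟪s, y - p⟫_ℝ ≤ h y := by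
  refine le_of_forall_pos_le_add fun η hη => ?_
  set ε := η / (‖y - p‖ + 1)
  have hεη : ε * ‖y - p‖ ≤ η := by
    rw [div_mul_eq_mul_div, div_le_iff₀ (by positivity)]
    nlinarith [norm_nonneg (y - p)]
  have hseg : Tendsto (fun t : ℝ => p + t • (y - p)) (𝓝[>] 0) (𝓝 p) := by
    have : Continuous fun t : ℝ => p + t • (y - p) := by fun_prop
    simpa using (this.tendsto 0).mono_left nhdsWithin_le_nhds
  obtain ⟨t, hfrechet, ht0, ht1⟩ :=
    ((hseg.eventually (hs ε (by positivity))).and (Ioc_mem_nhdsGT one_pos)).exists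
  rw [add_sub_cancel_left, real_inner_smul_right, norm_smul, Real.norm_of_nonneg ht0.le]
    at hfrechet
  have hconv : h (p + t • (y - p)) ≤ (1 - t) * h p + t * h y := by
    have := hh.2 hp hy (sub_nonneg.2 ht1) ht0.le (by ring)
    rwa [show (1 - t) • p + t • y = p + t • (y - p) by module] at this
  have hslope : ⟪s, y - p⟫_ℝ - ε * ‖y - p‖ ≤ h y - h p :=
    le_of_mul_le_mul_left (by nlinarith) ht0
  linarith

theorem apply_one_le_apply_zero_of_sub_le_mul_sub {ψ σ : ℝ → ℝ}
    (h : ∀ a b, 0 ≤ a → a ≤ b → b ≤ 1 → ψ b - ψ a ≤ (σ b - σ a) * (b - a)) : ψ 1 ≤ ψ 0 := by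
  have hN : ∀ N : ℕ, 1 ≤ N → ψ 1 - ψ 0 ≤ (σ 1 - σ 0) / N := by
    intro N hN
    have hN₀ : (0 : ℝ) < N := by exact_mod_cast hN
    have hgrid : ∀ k ∈ Finset.range N, ((k + 1 : ℕ) : ℝ) / N - k / N = 1 / N := by
      intro k _
      push_cast
      ring
    calc ψ 1 - ψ 0 = ∑ k ∈ Finset.range N, (ψ ((k + 1 : ℕ) / N) - ψ (k / N)) := by
          rw [Finset.sum_range_sub (fun k : ℕ => ψ (k / N)), div_self hN₀.ne']
          simp
      _ ≤ ∑ k ∈ Finset.range N, (σ ((k + 1 : ℕ) / N) - σ (k / N)) * (1 / N) := by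
          refine Finset.sum_le_sum fun k hk => ?_
          rw [← hgrid k hk]
          have hk' : k + 1 ≤ N := Finset.mem_range.1 hk
          refine h _ _ (by positivity) (by gcongr; simp) ?_
          rw [div_le_one hN₀]
          exact_mod_cast hk'
      _ = (σ 1 - σ 0) / N := by
          rw [← Finset.sum_mul, Finset.sum_range_sub (fun k : ℕ => σ (k / N)), div_self hN₀.ne']
          simp [div_eq_mul_inv]
  exact sub_nonpos.1 <| ge_of_tendsto (tendsto_const_div_atTop_nhds_zero_nat (σ 1 - σ 0))
    (eventually_atTop.2 ⟨1, hN⟩)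

theorem sub_sub_sub_le_of_subgradient_sub_le {U : Set E} (hU : Convex ℝ U) {h₁ h₂ : E → ℝ}
    {s₁ s₂ : E → E} {M : ℝ}
    (hs₁ : ∀ p ∈ U, ∀ y ∈ U, h₁ p + ⟪s₁ p, y - p⟫_ℝ ≤ h₁ y)
    (hs₂ : ∀ p ∈ U, ∀ y ∈ U, h₂ p + ⟪s₂ p, y - p⟫_ℝ ≤ h₂ y)
    (hM : ∀ p ∈ U, ‖s₂ p - s₁ p‖ ≤ M) {y z : E} (hy : y ∈ U) (hz : z ∈ U) :
    (h₂ z - h₁ z) - (h₂ y - h₁ y) ≤ M * ‖z - y‖ := by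
  set c : ℝ → E := fun τ => y + τ • (z - y)
  have hcU : ∀ τ, 0 ≤ τ → τ ≤ 1 → c τ ∈ U := fun τ h₀ h₁ => hU.add_smul_sub_mem hy hz ⟨h₀, h₁⟩
  have hcsub : ∀ a b, c b - c a = (b - a) • (z - y) := fun a b => by simp only [c]; module
  have key := apply_one_le_apply_zero_of_sub_le_mul_sub
    (ψ := fun τ => h₂ (c τ) - h₁ (c τ) - M * ‖z - y‖ * τ) (σ := fun τ => ⟪s₁ (c τ), z - y⟫_ℝ)
    fun a b ha hab hb => by
      have hca := hcU a ha (hab.trans hb)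
      have hcb := hcU b (ha.trans hab) hb
      have h₁ab := hs₁ _ hca _ hcb
      have h₂ba := hs₂ _ hcb _ hca
      have hgap : ⟪s₂ (c b) - s₁ (c b), z - y⟫_ℝ ≤ M * ‖z - y‖ :=
        (real_inner_le_norm _ _).trans (mul_le_mul_of_nonneg_right (hM _ hcb) (norm_nonneg _))
      rw [hcsub, real_inner_smul_right] at h₁ab
      rw [hcsub, real_inner_smul_right] at h₂ba
      rw [inner_sub_left] at hgap
      nlinarith [mul_le_mul_of_nonneg_left hgap (sub_nonneg.2 hab)]
  simp [c] at key
  linarith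

theorem ConvexOn.exists_continuousLinearMap_sandwich {F : Type*} [AddCommGroup F] [Module ℝ F]
    [TopologicalSpace F] [IsTopologicalAddGroup F] [ContinuousSMul ℝ F] {U : Set F}
    {h ℓ : F → ℝ} {x : F} (hh : ConvexOn ℝ U h) (hℓ : ConcaveOn ℝ univ ℓ) (hℓc : Continuous ℓ)
    (hle : ∀ y ∈ U, ℓ y ≤ h y) (hx : x ∈ U) (hxeq : ℓ x = h x) :
    ∃ φ : F →L[ℝ] ℝ, (∀ y, ℓ y ≤ h x + φ (y - x)) ∧ ∀ y ∈ U, h x + φ (y - x) ≤ h y := by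
  set D : Set (F × ℝ) := {q | q.2 < ℓ q.1}
  have hDconv : Convex ℝ D := by
    rintro ⟨y₁, a₁⟩ h₁ ⟨y₂, a₂⟩ h₂ a b ha hb hab
    have hconc := hℓ.2 (mem_univ y₁) (mem_univ y₂) ha hb hab
    simp only [D, mem_ofPred_eq, Prod.smul_mk, Prod.mk_add_mk, smul_eq_mul] at h₁ h₂ hconc ⊢
    have hm : 0 < min (ℓ y₁ - a₁) (ℓ y₂ - a₂) := lt_min (sub_pos.2 h₁) (sub_pos.2 h₂)
    nlinarith [mul_le_mul_of_nonneg_left (min_le_left (ℓ y₁ - a₁) (ℓ y₂ - a₂)) ha,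
      mul_le_mul_of_nonneg_left (min_le_right (ℓ y₁ - a₁) (ℓ y₂ - a₂)) hb]
  have hdisj : Disjoint D {q : F × ℝ | q.1 ∈ U ∧ h q.1 ≤ q.2} :=
    Set.disjoint_left.2 fun q hD hC => (hD.trans_le ((hle _ hC.1).trans hC.2)).false
  obtain ⟨f, u, hfD, hfC⟩ := geometric_hahn_banach_open hDconv
    (isOpen_lt continuous_snd (hℓc.comp continuous_fst)) hh.convex_epigraph hdisj
  -- With `f (y, a) = φ₀ y + a * β`, the point `(x, h x)` lies on the boundary of both sets, which
  -- forces `β > 0` and `u = f (x, h x)`; the affine map is then `-β⁻¹ • φ₀`.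
  set φ₀ := f.comp (ContinuousLinearMap.inl ℝ F ℝ)
  set β := f (0, 1)
  have hf : ∀ y a, f (y, a) = φ₀ y + a * β := fun y a => by
    rw [show ((y, a) : F × ℝ) = (y, 0) + a • (0, 1) by ext <;> simp, map_add, map_smul,
      smul_eq_mul, mul_comm]
    rfl
  have hC : ∀ y ∈ U, u ≤ φ₀ y + h y * β := fun y hy => hf y (h y) ▸ hfC (y, h y) ⟨hy, le_rfl⟩
  have hD : ∀ y, φ₀ y + ℓ y * β ≤ u := fun y => by
    have hlim : Tendsto (fun a => φ₀ y + a * β) (𝓝[<] ℓ y) (𝓝 (φ₀ y + ℓ y * β)) :=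
      (Continuous.tendsto (by fun_prop) _).mono_left nhdsWithin_le_nhds
    exact le_of_tendsto hlim
      (eventually_nhdsWithin_of_forall fun a ha => (hf y a ▸ hfD (y, a) ha).le)
  have hβ : 0 < β := by
    have hbelow := hf x (h x - 1) ▸ hfD (x, h x - 1) (show h x - 1 < ℓ x by linarith)
    nlinarith [hC x hx]
  have hu : u = φ₀ x + h x * β := le_antisymm (hC x hx) (hxeq ▸ hD x)
  refine ⟨-β⁻¹ • φ₀, fun y => ?_, fun y hy => ?_⟩
  all_goals
    simp only [FunLike.coe_smul, Pi.smul_apply, map_sub, smul_eq_mul]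
    refine le_of_mul_le_mul_right ?_ hβ
    field_simp
  · linarith [hD y]
  · linarith [hC y hy]

theorem ConvexOn.exists_subgradient_norm_sub_le [CompleteSpace E] {U : Set E} {h : E → ℝ}
    {x s : E} {M : ℝ} (hh : ConvexOn ℝ U h) (hx : x ∈ U) (hM : 0 ≤ M)
    (hlow : ∀ y ∈ U, h x + ⟪s, y - x⟫_ℝ - M * ‖y - x‖ ≤ h y) :
    ∃ t, ‖t - s‖ ≤ M ∧ ∀ y ∈ U, h x + ⟪t, y - x⟫_ℝ ≤ h y := by
  have hℓ : ConcaveOn ℝ univ fun y => h x + ⟪s, y - x⟫_ℝ - M * ‖y - x‖ := by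
    refine ⟨convex_univ, fun y₁ _ y₂ _ a b ha hb hab => ?_⟩
    obtain rfl : b = 1 - a := by linarith
    have hsplit : a • y₁ + (1 - a) • y₂ - x = a • (y₁ - x) + (1 - a) • (y₂ - x) := by module
    have hnorm : ‖a • (y₁ - x) + (1 - a) • (y₂ - x)‖ ≤ a * ‖y₁ - x‖ + (1 - a) * ‖y₂ - x‖ := by
      refine (norm_add_le _ _).trans_eq ?_
      rw [norm_smul_of_nonneg ha, norm_smul_of_nonneg hb]
    simp only [smul_eq_mul, hsplit, inner_add_right, real_inner_smul_right]
    nlinarith [mul_le_mul_of_nonneg_left hnorm hM]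
  obtain ⟨φ, hφℓ, hφh⟩ :=
    hh.exists_continuousLinearMap_sandwich hℓ (by fun_prop) hlow hx (by simp)
  set t := (InnerProductSpace.toDual ℝ E).symm φ
  have ht : ∀ v, ⟪t, v⟫_ℝ = φ v := fun v => InnerProductSpace.toDual_symm_apply
  refine ⟨t, ?_, fun y hy => (ht _).symm ▸ hφh y hy⟩
  have hsq : ‖t - s‖ ^ 2 ≤ M * ‖t - s‖ := by
    have := hφℓ (x + (s - t))
    rw [add_sub_cancel_left, ← ht] at this
    rw [norm_sub_rev, ← real_inner_self_eq_norm_sq, inner_sub_left]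
    linarith
  nlinarith [norm_nonneg (t - s)]

theorem ConvexOn.add_half_mul_norm_sq_mono {U : Set E} {f : E → ℝ} {lam lam' : ℝ}
    (hf : ConvexOn ℝ U fun y => f y + lam / 2 * ‖y‖ ^ 2) (hle : lam ≤ lam') :
    ConvexOn ℝ U fun y => f y + lam' / 2 * ‖y‖ ^ 2 := by
  have hsq : ConvexOn ℝ U fun y => ((lam' - lam) / 2) • (norm ^ 2) y :=
    ((convexOn_norm hf.1).pow (fun _ _ => norm_nonneg _) 2).smul (by linarith)
  refine (hf.add hsq).congr fun y _ => ?_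
  simp only [Pi.add_apply, Pi.pow_apply, smul_eq_mul]
  ring

theorem LocWeaklyConvexOn.exists_ball_convexOn {O : Set E} {f₁ f₂ : E → ℝ} (hO : IsOpen O)
    (hf₁ : LocWeaklyConvexOn f₁ O) (hf₂ : LocWeaklyConvexOn f₂ O) {x : E} (hx : x ∈ O) :
    ∃ lam : ℝ, ∃ ε > 0, ball x ε ⊆ O ∧
      ConvexOn ℝ (ball x ε) (fun y => f₁ y + lam / 2 * ‖y‖ ^ 2) ∧
      ConvexOn ℝ (ball x ε) (fun y => f₂ y + lam / 2 * ‖y‖ ^ 2) := by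
  obtain ⟨lam₁, ε₁, hε₁, hc₁⟩ := hf₁ x hx
  obtain ⟨lam₂, ε₂, hε₂, hc₂⟩ := hf₂ x hx
  obtain ⟨ε₀, hε₀, hball⟩ := Metric.isOpen_iff.1 hO x hx
  refine ⟨max lam₁ lam₂, min ε₀ (min ε₁ ε₂), lt_min hε₀ (lt_min hε₁ hε₂),
    (ball_subset_ball (min_le_left _ _)).trans hball, ?_, ?_⟩
  · exact (hc₁.add_half_mul_norm_sq_mono (le_max_left _ _)).subset
      (ball_subset_ball ((min_le_right _ _).trans (min_le_left _ _))) (convex_ball _ _)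
  · exact (hc₂.add_half_mul_norm_sq_mono (le_max_right _ _)).subset
      (ball_subset_ball ((min_le_right _ _).trans (min_le_right _ _))) (convex_ball _ _)

theorem exists_mem_fsubdiff_norm_sub_le [CompleteSpace E] {O : Set E} (hO : IsOpen O)
    {f₁ f₂ : E → ℝ} (hf₁ : LocWeaklyConvexOn f₁ O) (hf₂ : LocWeaklyConvexOn f₂ O)
    {g₁ g₂ : E → E} (hg₁ : ∀ x ∈ O, g₁ x ∈ fsubdiff f₁ x) (hg₂ : ∀ x ∈ O, g₂ x ∈ fsubdiff f₂ x)
    {M : ℝ} (hM : ∀ z ∈ O, ‖g₁ z - g₂ z‖ ≤ M) {x u : E} (hx : x ∈ O)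
    (hu : u ∈ fsubdiff f₁ x) : ∃ w ∈ fsubdiff f₂ x, ‖u - w‖ ≤ M := by
  obtain ⟨lam, ε, hε, hball, hc₁, hc₂⟩ := hf₁.exists_ball_convexOn hO hf₂ hx
  set q : E → ℝ := fun y => lam / 2 * ‖y‖ ^ 2
  have hq : ∀ p, HasFDerivAt q (innerSL ℝ (lam • p)) p := hasFDerivAt_half_mul_norm_sq lam
  have hx' : x ∈ ball x ε := mem_ball_self hε
  have hsub₁ : ∀ p ∈ ball x ε, ∀ y ∈ ball x ε,
      (f₁ + q) p + ⟪g₁ p + lam • p, y - p⟫_ℝ ≤ (f₁ + q) y := fun p hp _ hy =>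
    hc₁.add_inner_le_of_mem_fsubdiff hp ((add_mem_fsubdiff_add_iff (hq p)).2 (hg₁ p (hball hp))) hy
  have hsub₂ : ∀ p ∈ ball x ε, ∀ y ∈ ball x ε,
      (f₂ + q) p + ⟪g₂ p + lam • p, y - p⟫_ℝ ≤ (f₂ + q) y := fun p hp _ hy =>
    hc₂.add_inner_le_of_mem_fsubdiff hp ((add_mem_fsubdiff_add_iff (hq p)).2 (hg₂ p (hball hp))) hy
  have hlow : ∀ y ∈ ball x ε,
      (f₂ + q) x + ⟪u + lam • x, y - x⟫_ℝ - M * ‖y - x‖ ≤ (f₂ + q) y := by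
    intro y hy
    have hdiff := sub_sub_sub_le_of_subgradient_sub_le (convex_ball x ε) hsub₁ hsub₂
      (fun p hp => by rw [add_sub_add_right_eq_sub, norm_sub_rev]; exact hM p (hball hp)) hy hx'
    have hu' := hc₁.add_inner_le_of_mem_fsubdiff hx' ((add_mem_fsubdiff_add_iff (hq x)).2 hu) hy
    rw [norm_sub_rev] at hdiff
    simp only [Pi.add_apply, q] at hdiff ⊢
    linarith
  obtain ⟨t, hts, ht⟩ := hc₂.exists_subgradient_norm_sub_le hx' ((norm_nonneg _).trans (hM x hx))
    hlow
  refine ⟨t - lam • x, (add_mem_fsubdiff_add_iff (hq x)).1 ?_, ?_⟩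
  · rw [sub_add_cancel]
    exact mem_fsubdiff_of_eventually_le (eventually_of_mem (ball_mem_nhds x hε) ht)
  · rwa [← norm_neg, neg_sub, sub_sub, add_comm]

/-- For locally weakly convex `f₁, f₂` on an open set `O ⊆ ℝ^d`, and
selections `g₁, g₂` of the subdifferentials `∂f₁, ∂f₂` on `O`,
`sup_{x ∈ O} H(∂f₁(x), ∂f₂(x)) ≤ sup_{x ∈ O} ‖g₁(x) - g₂(x)‖`. -/
theorem statement0
    (d : ℕ) (O : Set (EuclideanSpace ℝ (Fin d))) (hO : IsOpen O)
    (f₁ f₂ : EuclideanSpace ℝ (Fin d) → ℝ)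
    (hf₁ : LocWeaklyConvexOn f₁ O) (hf₂ : LocWeaklyConvexOn f₂ O)
    (g₁ g₂ : EuclideanSpace ℝ (Fin d) → EuclideanSpace ℝ (Fin d))
    (hg₁ : ∀ x ∈ O, g₁ x ∈ fsubdiff f₁ x) (hg₂ : ∀ x ∈ O, g₂ x ∈ fsubdiff f₂ x) :
    ⨆ x ∈ O, EMetric.hausdorffEdist (fsubdiff f₁ x) (fsubdiff f₂ x)
      ≤ ⨆ x ∈ O, ENNReal.ofReal ‖g₁ x - g₂ x‖ := by
  set S := ⨆ x ∈ O, ENNReal.ofReal ‖g₁ x - g₂ x‖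
  rcases eq_top_or_lt_top S with hS | hS
  · exact hS ▸ le_top
  have hM : ∀ z ∈ O, ‖g₁ z - g₂ z‖ ≤ S.toReal := fun z hz =>
    (ENNReal.ofReal_le_iff_le_toReal hS.ne).1
      (le_iSup₂ (f := fun z (_ : z ∈ O) => ENNReal.ofReal ‖g₁ z - g₂ z‖) z hz)
  have hM' : ∀ z ∈ O, ‖g₂ z - g₁ z‖ ≤ S.toReal := fun z hz => norm_sub_rev (g₁ z) _ ▸ hM z hz
  have hedist : ∀ {u w : EuclideanSpace ℝ (Fin d)}, ‖u - w‖ ≤ S.toReal → edist u w ≤ S := by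
    intro u w huw
    rw [edist_dist, dist_eq_norm, ← ENNReal.ofReal_toReal hS.ne]
    exact ENNReal.ofReal_le_ofReal huw
  refine iSup₂_le fun x hx => Metric.hausdorffEDist_le_of_mem_edist (fun u hu => ?_) fun u hu => ?_
  · obtain ⟨w, hw, huw⟩ := exists_mem_fsubdiff_norm_sub_le hO hf₁ hf₂ hg₁ hg₂ hM hx hu
    exact ⟨w, hw, hedist huw⟩
  · obtain ⟨w, hw, huw⟩ := exists_mem_fsubdiff_norm_sub_le hO hf₂ hf₁ hg₂ hg₁ hM' hx hu
    exact ⟨w, hw, hedist huw⟩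
end
end

section
/- Let f : ℝ^d × Ξ → ℝ be a random function and O ⊆ ℝ^d an open set. Assume (Assumption A) f(x) := E_{ξ∼P}[f(x, ξ)] < ∞ for all x ∈ O, and (Assumption B) for every x ∈ O there exist ε(x) > 0 and a nonnegative measurable λ(x, ξ) with E_{ξ∼P}[λ(x, ξ)] < ∞ such that y ↦ f(y, ξ) + (λ(x,ξ)/2)‖y‖² is convex on B(x; ε(x)). Let ξ₁, …, ξ_m be i.i.d. samples from P and f_S(x) = (1/m) Σ_{i=1}^m f(x, ξ_i). Then with probability one, f_S is locally weakly convex on O; moreover f(x) = E[f_S(x)] is locally weakly convex on O. -/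
open MeasureTheory Metric Set Filter
open scoped InnerProductSpace ENNReal NNReal Topology

noncomputable section

variable {E : Type*} [NormedAddCommGroup E] [InnerProductSpace ℝ E]

/-!
Weak convexity with modulus `λ` is stable under nonnegative scaling, finite sums and integration,
the modulus being scaled, summed or integrated along with the function. So for every sample, not
only almost every one, the empirical risk is weakly convex on the common ball of Assumption B.
The population risk is the integral of the `f(·, ξ)` over that ball shrunk to lie inside `O`,
where Assumption A applies; the integrability of `λ` keeps the integrated modulus finite.
-/

theorem ConvexOn.finset_sum {𝕜 V β ι : Type*} [Semiring 𝕜] [PartialOrder 𝕜] [AddCommMonoid V]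
    [SMul 𝕜 V] [AddCommMonoid β] [PartialOrder β] [IsOrderedAddMonoid β] [Module 𝕜 β]
    {s : Set V} (t : Finset ι) {g : ι → V → β} (hs : Convex 𝕜 s)
    (h : ∀ i ∈ t, ConvexOn 𝕜 s (g i)) : ConvexOn 𝕜 s (fun y => ∑ i ∈ t, g i y) := by
  classical
  induction t using Finset.induction with
  | empty => simpa using convexOn_const 0 hs
  | insert a t hat ih =>
    simp only [Finset.sum_insert hat]
    exact (h a (Finset.mem_insert_self a t)).add (ih fun i hi => h i (Finset.mem_insert_of_mem hi))

theorem convexOn_integral {V Ξ : Type*} [AddCommMonoid V] [Module ℝ V] [MeasurableSpace Ξ]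
    {μ : Measure Ξ} {s : Set V} {F : V → Ξ → ℝ} (hs : Convex ℝ s)
    (hF : ∀ ξ, ConvexOn ℝ s (F · ξ)) (hint : ∀ y ∈ s, Integrable (F y) μ) :
    ConvexOn ℝ s (fun y => ∫ ξ, F y ξ ∂μ) := by
  refine ⟨hs, fun y hy z hz a b ha hb hab => ?_⟩
  calc ∫ ξ, F (a • y + b • z) ξ ∂μ
      ≤ ∫ ξ, (a * F y ξ + b * F z ξ) ∂μ :=
        integral_mono (hint _ (hs hy hz ha hb hab))
          (((hint y hy).const_mul a).add ((hint z hz).const_mul b))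
          fun ξ => (hF ξ).2 hy hz ha hb hab
    _ = a • ∫ ξ, F y ξ ∂μ + b • ∫ ξ, F z ξ ∂μ := by
        rw [integral_add ((hint y hy).const_mul a) ((hint z hz).const_mul b),
          integral_const_mul, integral_const_mul, smul_eq_mul, smul_eq_mul]

section WeaklyConvex

variable {V : Type*} [SeminormedAddCommGroup V] [Module ℝ V] {s : Set V}

def WeaklyConvexOn (lam : ℝ) (s : Set V) (g : V → ℝ) : Prop :=
  ConvexOn ℝ s (fun y => g y + lam / 2 * ‖y‖ ^ 2)

theorem WeaklyConvexOn.subset {lam : ℝ} {g : V → ℝ} {t : Set V} (h : WeaklyConvexOn lam s g)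
    (hts : t ⊆ s) (ht : Convex ℝ t) : WeaklyConvexOn lam t g :=
  ConvexOn.subset h hts ht

theorem WeaklyConvexOn.const_mul {lam c : ℝ} {g : V → ℝ} (h : WeaklyConvexOn lam s g)
    (hc : 0 ≤ c) : WeaklyConvexOn (c * lam) s (fun y => c * g y) :=
  (ConvexOn.smul hc h).congr fun y _ => by simp only [smul_eq_mul]; ring

theorem WeaklyConvexOn.finset_sum {ι : Type*} (t : Finset ι) {lam : ι → ℝ} {g : ι → V → ℝ}
    (hs : Convex ℝ s) (h : ∀ i ∈ t, WeaklyConvexOn (lam i) s (g i)) :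
    WeaklyConvexOn (∑ i ∈ t, lam i) s (fun y => ∑ i ∈ t, g i y) :=
  (ConvexOn.finset_sum t hs h).congr fun y _ => by
    simp only [Finset.sum_add_distrib, Finset.sum_div, Finset.sum_mul]

theorem WeaklyConvexOn.integral {Ξ : Type*} [MeasurableSpace Ξ] {μ : Measure Ξ}
    {lam : Ξ → ℝ} {g : V → Ξ → ℝ} (hs : Convex ℝ s) (h : ∀ ξ, WeaklyConvexOn (lam ξ) s (g · ξ))
    (hg : ∀ y ∈ s, Integrable (g y) μ) (hlam : Integrable lam μ) :
    WeaklyConvexOn (∫ ξ, lam ξ ∂μ) s (fun y => ∫ ξ, g y ξ ∂μ) := by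
  have hlam' (y : V) : Integrable (fun ξ => lam ξ / 2 * ‖y‖ ^ 2) μ :=
    (hlam.div_const 2).mul_const _
  refine (convexOn_integral hs h fun y hy => (hg y hy).add (hlam' y)).congr fun y hy => ?_
  simp only
  rw [integral_add (hg y hy) (hlam' y), integral_mul_const, integral_div]

end WeaklyConvex

theorem statement4_general
    (d m : ℕ)
    (Ξ : Type*) [MeasurableSpace Ξ] (P : Measure Ξ)
    (f : EuclideanSpace ℝ (Fin d) → Ξ → ℝ)
    (O : Set (EuclideanSpace ℝ (Fin d))) (hO : IsOpen O)
    (hA : ∀ x ∈ O, Integrable (f x) P)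
    (hB : ∀ x ∈ O, ∃ ε > 0, ∃ lam : Ξ → ℝ, Measurable lam ∧ (∀ ξ, 0 ≤ lam ξ) ∧
      Integrable lam P ∧
      ∀ ξ, ConvexOn ℝ (ball x ε) (fun y => f y ξ + lam ξ / 2 * ‖y‖ ^ 2)) :
    (∀ᵐ ω ∂(Measure.pi fun _ : Fin m => P),
      LocWeaklyConvexOn (fun x => (m : ℝ)⁻¹ * ∑ i, f x (ω i)) O) ∧
    LocWeaklyConvexOn (fun x => ∫ ξ, f x ξ ∂P) O := by
  refine ⟨.of_forall fun ω x hx => ?_, fun x hx => ?_⟩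
  · obtain ⟨ε, hε, lam, -, -, -, hconv⟩ := hB x hx
    exact ⟨_, ε, hε, (WeaklyConvexOn.finset_sum Finset.univ (convex_ball x ε)
      fun i _ => hconv (ω i)).const_mul (by positivity)⟩
  · obtain ⟨δ, hδ, hδO⟩ := Metric.isOpen_iff.1 hO x hx
    obtain ⟨ε, hε, lam, -, -, hlam, hconv⟩ := hB x hx
    have hball : ball x (min ε δ) ⊆ ball x ε := ball_subset_ball (min_le_left _ _)
    refine ⟨∫ ξ, lam ξ ∂P, min ε δ, lt_min hε hδ, ?_⟩
    exact WeaklyConvexOn.integral (convex_ball _ _)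
      (fun ξ => WeaklyConvexOn.subset (hconv ξ) hball (convex_ball _ _))
      (fun y hy => hA y (hδO (ball_subset_ball (min_le_right _ _) hy))) hlam

/-- Under Assumption A (finite population risk on the open set `O`) and
Assumption B (local weak convexity of `f(·, ξ)` with integrable modulus), with probability one
over i.i.d. samples `ξ₁, …, ξ_m ∼ P`, the empirical risk `f_S(x) = (1/m) Σᵢ f(x, ξᵢ)` is
locally weakly convex on `O`; moreover the population risk `f(x) = E[f(x, ξ)]` is locally
weakly convex on `O`. -/
theorem statement4
    (d m : ℕ) (hm : 0 < m)
    (Ξ : Type*) [MeasurableSpace Ξ] (P : Measure Ξ) [IsProbabilityMeasure P]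
    (f : EuclideanSpace ℝ (Fin d) → Ξ → ℝ) (hfmeas : ∀ x, Measurable (f x))
    (O : Set (EuclideanSpace ℝ (Fin d))) (hO : IsOpen O)
    (hA : ∀ x ∈ O, Integrable (f x) P)
    (hB : ∀ x ∈ O, ∃ ε > 0, ∃ lam : Ξ → ℝ, Measurable lam ∧ (∀ ξ, 0 ≤ lam ξ) ∧
      Integrable lam P ∧
      ∀ ξ, ConvexOn ℝ (ball x ε) (fun y => f y ξ + lam ξ / 2 * ‖y‖ ^ 2)) :
    (∀ᵐ ω ∂(Measure.pi fun _ : Fin m => P),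
      LocWeaklyConvexOn (fun x => (m : ℝ)⁻¹ * ∑ i, f x (ω i)) O) ∧
    LocWeaklyConvexOn (fun x => ∫ ξ, f x ξ ∂P) O :=
  statement4_general d m Ξ P f O hO hA hB
end
end

section
/- Fix r > 0, d ≥ 1, m ≥ 1, a nonnegative number vc(W), and δ ∈ (0, 1). Let ε_k = r 2^{−k} for k ≥ 0; for each k ≥ 1 let Z_{2,ε_k} be an ε_k-cover of the ball of radius r with log |Z_{2,ε_k}| ≤ d log(2 + r/ε_k), and let Z_{2,ε_0} be a singleton. Set δ_k = δ · 2^{−(k+1)} · (|Z_{2,ε_k}| · |Z_{2,ε_{k−1}}|)^{−1} for k ≥ 1 and Δ(δ') = sqrt( (d + vc(W) log m + log(1/δ')) / m ). Then there exists a universal constant c > 0 such that Σ_{k=1}^∞ ε_k · max{Δ(δ_k), Δ(δ_k)²} ≤ c r · max{Δ(δ), Δ(δ)²}. -/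
open MeasureTheory Metric Set Filter
open scoped ENNReal NNReal Topology

noncomputable section

lemma sqrt_le_self' {a : ℝ} (h : 1 ≤ a) : Real.sqrt a ≤ a := by
  have h2 := Real.sqrt_le_sqrt (show a ≤ a^2 by nlinarith)
  rwa [Real.sqrt_sq (by linarith)] at h2

lemma aux_g_summable : Summable (fun n : ℕ => ((n:ℝ) + 1) * (1/2)^n) := by
  have h1 : Summable (fun n : ℕ => (n:ℝ) * (1/2)^n) := by
    simpa using summable_pow_mul_geometric_of_norm_lt_one 1 (by norm_num : ‖(1/2:ℝ)‖ < 1)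
  have h2 : Summable (fun n : ℕ => ((1:ℝ)/2)^n) :=
    summable_geometric_of_lt_one (by norm_num) (by norm_num)
  exact (h1.add h2).congr (fun n => by ring)

lemma aux_summable : Summable (fun k : ℕ => ((k:ℝ) + 2) * (1/2)^(k+1)) :=
  ((summable_nat_add_iff 1).2 aux_g_summable).congr (fun k => by push_cast; ring)

lemma aux_tsum : ∑' k : ℕ, ((k:ℝ) + 2) * (1/2)^(k+1) = 3 := by
  have h1 : ∑' n : ℕ, (n:ℝ) * (1/2)^n = 2 := by
    rw [tsum_coe_mul_geometric_of_norm_lt_one (by norm_num : ‖(1/2:ℝ)‖ < 1)]; norm_num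
  have h2 : ∑' n : ℕ, ((1:ℝ)/2)^n = 2 := by
    rw [tsum_geometric_of_lt_one (by norm_num) (by norm_num)]; norm_num
  have hs1 : Summable (fun n : ℕ => (n:ℝ) * (1/2)^n) := by
    simpa using summable_pow_mul_geometric_of_norm_lt_one 1 (by norm_num : ‖(1/2:ℝ)‖ < 1)
  have hs2 : Summable (fun n : ℕ => ((1:ℝ)/2)^n) :=
    summable_geometric_of_lt_one (by norm_num) (by norm_num)
  have hg : ∑' n : ℕ, ((n:ℝ) + 1) * (1/2)^n = 4 := by
    rw [tsum_congr (fun n : ℕ => show ((n:ℝ)+1)*(1/2)^n = (n:ℝ)*(1/2)^n + (1/2)^n by ring),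
      Summable.tsum_add hs1 hs2, h1, h2]; norm_num
  have hsplit := Summable.tsum_eq_zero_add aux_g_summable
  rw [hg] at hsplit
  have heq : ∑' k : ℕ, ((k:ℝ) + 2) * (1/2)^(k+1)
      = ∑' k : ℕ, ((((k+1):ℕ):ℝ) + 1) * (1/2)^(k+1) := tsum_congr (fun k => by push_cast; ring)
  rw [heq]; linarith [hsplit]

set_option maxHeartbeats 1000000 in
/-- accumulation of chaining error terms. With `ε_k = r2^{-k}`,
`ε_k`-covers `Z_{2,ε_k}` of the ball of radius `r` satisfying
`log|Z_{2,ε_k}| ≤ d log(2 + r/ε_k)` (and `Z_{2,ε_0}` a singleton),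
`δ_k = δ·2^{-(k+1)}·(|Z_{2,ε_k}||Z_{2,ε_{k-1}}|)⁻¹`, and
`Δ(δ') = sqrt((d + vc(W) log m + log(1/δ'))/m)`, there is a universal constant `c > 0` with
`Σ_{k≥1} ε_k · max{Δ(δ_k), Δ(δ_k)²} ≤ c r · max{Δ(δ), Δ(δ)²}`. -/
theorem statement17 :
    ∃ c : ℝ, 0 < c ∧
    ∀ (d m : ℕ), 1 ≤ d → 1 ≤ m →
    ∀ (r V δ : ℝ), 0 < r → 0 ≤ V → 0 < δ → δ < 1 →
    ∀ (Z : ℕ → Finset (EuclideanSpace ℝ (Fin d))),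
      (Z 0).card = 1 →
      (∀ k : ℕ, 1 ≤ k →
        ∀ x ∈ Metric.closedBall (0 : EuclideanSpace ℝ (Fin d)) r,
          ∃ y ∈ Z k, dist x y ≤ r / 2 ^ k) →
      (∀ k : ℕ, 1 ≤ k →
        Real.log ((Z k).card) ≤ (d : ℝ) * Real.log (2 + r / (r / 2 ^ k))) →
    ∀ (Δ : ℝ → ℝ),
      (∀ δ' : ℝ, Δ δ' = Real.sqrt (((d : ℝ) + V * Real.log m + Real.log (1 / δ')) / m)) →
      (∑' k : ℕ, (r / 2 ^ (k + 1)) *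
          max (Δ (δ / 2 ^ (k + 2) / (((Z (k + 1)).card : ℝ) * ((Z k).card : ℝ))))
            (Δ (δ / 2 ^ (k + 2) / (((Z (k + 1)).card : ℝ) * ((Z k).card : ℝ))) ^ 2))
        ≤ c * r * max (Δ δ) (Δ δ ^ 2) := by
  refine ⟨12, by norm_num, ?_⟩
  intro d m hd hm r V δ hr hV hδ0 hδ1 Z hZ0 hcover hcard Δ hΔ
  have hm1 : (1:ℝ) ≤ (m:ℝ) := by exact_mod_cast hm
  have hd1 : (1:ℝ) ≤ (d:ℝ) := by exact_mod_cast hd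
  set B : ℝ := (d:ℝ) + V * Real.log m + Real.log (1/δ) with hBdef
  clear_value B
  have hlogδ : 0 < Real.log (1/δ) := Real.log_pos (by rw [lt_div_iff₀ hδ0]; linarith)
  have hVlog : 0 ≤ V * Real.log m := mul_nonneg hV (Real.log_nonneg hm1)
  have hBpos : 0 < B := by rw [hBdef]; nlinarith
  have hdB : (d:ℝ) ≤ B := by rw [hBdef]; linarith
  -- card lower bounds
  have hN1 : ∀ k : ℕ, (1:ℝ) ≤ ((Z k).card : ℝ) := by
    intro k
    rcases Nat.eq_zero_or_pos k with hk | hk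
    · simp [hk, hZ0]
    · obtain ⟨y, hy, -⟩ := hcover k hk 0 (by simp [hr.le])
      have : 0 < (Z k).card := Finset.card_pos.2 ⟨y, hy⟩
      exact_mod_cast this
  -- log card upper bounds
  have hlog2pos : (0:ℝ) < Real.log 2 := Real.log_pos (by norm_num)
  have hlogN : ∀ k : ℕ, Real.log ((Z k).card) ≤ (d:ℝ) * (((k:ℝ) + 2) * Real.log 2) := by
    intro k
    rcases Nat.eq_zero_or_pos k with hk | hk
    · simp [hk, hZ0]
      positivity
    · have h1 := hcard k hk
      have hrr : r / (r / 2 ^ k) = 2 ^ k := by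
        field_simp
      rw [hrr] at h1
      have h2 : Real.log (2 + (2:ℝ) ^ k) ≤ ((k:ℝ) + 2) * Real.log 2 := by
        have : (2:ℝ) + 2 ^ k ≤ 2 ^ (k + 2) := by
          have h2k : (1:ℝ) ≤ 2 ^ k := one_le_pow₀ (by norm_num)
          rw [pow_add]; nlinarith
        calc Real.log (2 + (2:ℝ) ^ k) ≤ Real.log (2 ^ (k+2)) :=
              Real.log_le_log (by positivity) this
          _ = ((k:ℝ) + 2) * Real.log 2 := by rw [Real.log_pow]; push_cast; ring
      calc Real.log ((Z k).card) ≤ (d:ℝ) * Real.log (2 + 2 ^ k) := h1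
        _ ≤ (d:ℝ) * (((k:ℝ) + 2) * Real.log 2) := by
            apply mul_le_mul_of_nonneg_left h2 (by positivity)
  set M := max (Δ δ) (Δ δ ^ 2) with hMdef
  have hΔδ : Δ δ = Real.sqrt (B / m) := by rw [hΔ, hBdef]
  have hΔδsq : Δ δ ^ 2 = B / m := by
    rw [hΔδ, Real.sq_sqrt (by positivity)]
  have hM0 : 0 ≤ M := le_trans (by rw [hΔδ]; positivity) (le_max_left _ _)
  -- key per-term bound
  have key : ∀ k : ℕ, (r / 2 ^ (k + 1)) *
      max (Δ (δ / 2 ^ (k + 2) / (((Z (k + 1)).card : ℝ) * ((Z k).card : ℝ))))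
        (Δ (δ / 2 ^ (k + 2) / (((Z (k + 1)).card : ℝ) * ((Z k).card : ℝ))) ^ 2)
      ≤ 4 * r * M * (((k:ℝ) + 2) * (1/2)^(k+1)) := by
    intro k
    set N1 : ℝ := ((Z (k+1)).card : ℝ)
    set N0 : ℝ := ((Z k).card : ℝ)
    have hN1' : (1:ℝ) ≤ N1 := hN1 (k+1)
    have hN0' : (1:ℝ) ≤ N0 := hN1 k
    set δk : ℝ := δ / 2 ^ (k + 2) / (N1 * N0) with hδkdef
    have hδkpos : 0 < δk := by positivity
    -- expand log (1/δk)
    have hlogδk : Real.log (1/δk) =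
        Real.log (1/δ) + ((k:ℝ) + 2) * Real.log 2 + Real.log N1 + Real.log N0 := by
      rw [hδkdef, one_div, one_div, Real.log_inv, Real.log_inv,
        Real.log_div (by positivity) (by positivity), Real.log_div (by positivity) (by positivity),
        Real.log_mul (by positivity) (by positivity), Real.log_pow]
      push_cast; ring
    set Bk : ℝ := (d:ℝ) + V * Real.log m + Real.log (1/δk) with hBkdef
    clear_value Bk
    have hBkB : B ≤ Bk := by
      rw [hBkdef, hBdef, hlogδk]
      have := Real.log_nonneg hN1'
      have := Real.log_nonneg hN0'
      have h2 : (0:ℝ) ≤ ((k:ℝ) + 2) * Real.log 2 :=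
        mul_nonneg (by positivity) hlog2pos.le
      linarith
    have hBkle : Bk ≤ 4 * ((k:ℝ) + 2) * B := by
      have hlN1 : Real.log N1 ≤ (d:ℝ) * (((k:ℝ) + 3) * Real.log 2) := by
        have := hlogN (k+1); push_cast at this ⊢; linarith
      have hlN0 : Real.log N0 ≤ (d:ℝ) * (((k:ℝ) + 2) * Real.log 2) := hlogN k
      have hk0 : (0:ℝ) ≤ (k:ℝ) := Nat.cast_nonneg k
      have hBk1 : Bk ≤ B + 3 * (d:ℝ) * (((k:ℝ) + 3) * Real.log 2) := by
        have hA : ((k:ℝ)+2) * Real.log 2 ≤ (d:ℝ) * (((k:ℝ) + 3) * Real.log 2) :=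
          le_trans (mul_le_mul_of_nonneg_right (by linarith) hlog2pos.le)
            (le_mul_of_one_le_left (by positivity) hd1)
        have hA2 : (d:ℝ) * (((k:ℝ)+2) * Real.log 2) ≤ (d:ℝ) * (((k:ℝ) + 3) * Real.log 2) :=
          mul_le_mul_of_nonneg_left
            (mul_le_mul_of_nonneg_right (by linarith) hlog2pos.le) (by positivity)
        rw [hBkdef, hBdef, hlogδk]
        linarith
      have hlog2 : Real.log 2 < 0.6931471808 := Real.log_two_lt_d9
      have hstep : 3 * (d:ℝ) * (((k:ℝ) + 3) * Real.log 2) ≤ (4 * ((k:ℝ) + 2) - 1) * B := by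
        have h6 : 3 * (d:ℝ) * (((k:ℝ) + 3) * Real.log 2) ≤ 3 * B * (((k:ℝ) + 3) * Real.log 2) := by
          have := mul_le_mul_of_nonneg_right hdB
            (by positivity : (0:ℝ) ≤ ((k:ℝ) + 3) * Real.log 2)
          nlinarith [this]
        have h7 : 3 * (((k:ℝ) + 3) * Real.log 2) ≤ 4 * ((k:ℝ) + 2) - 1 := by
          have hint : 0 ≤ (k:ℝ) * (0.6931471808 - Real.log 2) :=
            mul_nonneg hk0 (by linarith)
          nlinarith [hint]
        have h8 : 3 * B * (((k:ℝ) + 3) * Real.log 2) ≤ (4 * ((k:ℝ) + 2) - 1) * B := by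
          have := mul_le_mul_of_nonneg_right h7 hBpos.le
          nlinarith [this]
        linarith
      linarith
    have hΔk : Δ δk = Real.sqrt (Bk / m) := by rw [hΔ, hBkdef]
    have hΔksq : Δ δk ^ 2 = Bk / m := by
      rw [hΔk, Real.sq_sqrt (div_nonneg (by linarith) (by positivity))]
    have hfac1 : (1:ℝ) ≤ 4 * ((k:ℝ) + 2) := by
      have : (0:ℝ) ≤ (k:ℝ) := Nat.cast_nonneg k; linarith
    -- bound Δ δk
    have hb1 : Δ δk ≤ 4 * ((k:ℝ) + 2) * M := by
      have hq : Bk / m ≤ 4 * ((k:ℝ) + 2) * (B / m) := by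
        rw [show 4 * ((k:ℝ) + 2) * (B / m) = (4 * ((k:ℝ) + 2) * B) / m by ring]
        gcongr
      have h1 : Δ δk ≤ Real.sqrt (4 * ((k:ℝ) + 2) * (B / m)) := by
        rw [hΔk]
        exact Real.sqrt_le_sqrt hq
      have h2 : Real.sqrt (4 * ((k:ℝ) + 2) * (B / m))
          = Real.sqrt (4 * ((k:ℝ) + 2)) * Real.sqrt (B / m) :=
        Real.sqrt_mul (by positivity) _
      have h3 : Real.sqrt (4 * ((k:ℝ) + 2)) ≤ 4 * ((k:ℝ) + 2) := sqrt_le_self' hfac1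
      have h4 : Real.sqrt (B / m) ≤ M := by rw [← hΔδ]; exact le_max_left _ _
      calc Δ δk ≤ Real.sqrt (4 * ((k:ℝ) + 2)) * Real.sqrt (B / m) := by rw [← h2]; exact h1
        _ ≤ 4 * ((k:ℝ) + 2) * M := by
            apply mul_le_mul h3 h4 (Real.sqrt_nonneg _) (by linarith)
    have hb2 : Δ δk ^ 2 ≤ 4 * ((k:ℝ) + 2) * M := by
      rw [hΔksq]
      have h4 : B / m ≤ M := by rw [← hΔδsq]; exact le_max_right _ _
      have hq : Bk / m ≤ 4 * ((k:ℝ) + 2) * (B / m) := by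
        rw [show 4 * ((k:ℝ) + 2) * (B / m) = (4 * ((k:ℝ) + 2) * B) / m by ring]
        gcongr
      calc Bk / m ≤ 4 * ((k:ℝ) + 2) * (B / m) := hq
        _ ≤ 4 * ((k:ℝ) + 2) * M := by nlinarith
    have hmax : max (Δ δk) (Δ δk ^ 2) ≤ 4 * ((k:ℝ) + 2) * M := max_le hb1 hb2
    have hpow : r / 2 ^ (k + 1) = r * (1/2)^(k+1) := by
      rw [div_pow, one_pow]; ring
    calc (r / 2 ^ (k + 1)) * max (Δ δk) (Δ δk ^ 2)
        ≤ (r / 2 ^ (k + 1)) * (4 * ((k:ℝ) + 2) * M) := by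
          apply mul_le_mul_of_nonneg_left hmax (by positivity)
      _ = 4 * r * M * (((k:ℝ) + 2) * (1/2)^(k+1)) := by rw [hpow]; ring
  -- now sum up
  have hg : Summable (fun k : ℕ => 4 * r * M * (((k:ℝ) + 2) * (1/2)^(k+1))) :=
    aux_summable.mul_left _
  have htermnn : ∀ k : ℕ, 0 ≤ (r / 2 ^ (k + 1)) *
      max (Δ (δ / 2 ^ (k + 2) / (((Z (k + 1)).card : ℝ) * ((Z k).card : ℝ))))
        (Δ (δ / 2 ^ (k + 2) / (((Z (k + 1)).card : ℝ) * ((Z k).card : ℝ))) ^ 2) := by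
    intro k
    apply mul_nonneg (by positivity)
    exact le_trans (sq_nonneg _) (le_max_right _ _)
  have hf : Summable (fun k : ℕ => (r / 2 ^ (k + 1)) *
      max (Δ (δ / 2 ^ (k + 2) / (((Z (k + 1)).card : ℝ) * ((Z k).card : ℝ))))
        (Δ (δ / 2 ^ (k + 2) / (((Z (k + 1)).card : ℝ) * ((Z k).card : ℝ))) ^ 2)) :=
    Summable.of_nonneg_of_le htermnn key hg
  calc (∑' k : ℕ, (r / 2 ^ (k + 1)) *
          max (Δ (δ / 2 ^ (k + 2) / (((Z (k + 1)).card : ℝ) * ((Z k).card : ℝ))))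
            (Δ (δ / 2 ^ (k + 2) / (((Z (k + 1)).card : ℝ) * ((Z k).card : ℝ))) ^ 2))
      ≤ ∑' k : ℕ, 4 * r * M * (((k:ℝ) + 2) * (1/2)^(k+1)) := Summable.tsum_le_tsum key hf hg
    _ = 4 * r * M * ∑' k : ℕ, (((k:ℝ) + 2) * (1/2)^(k+1)) := tsum_mul_left
    _ = 12 * r * M := by rw [aux_tsum]; ring
end
end
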